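/- Let V_α, H_α be a × a, S, H_x be p × p, V_z, H_z be b × b real matrices, together with rectangular matrices H_{αx}, H_{αz}, H_{xα}, H_{xz}, H_{zα}, H_{zx} of the compatible sizes, forming the 3 × 3 block matrix H with block rows (H_α, H_{αx}, H_{αz}), (H_{xα}, H_x, H_{xz}), (H_{zα}, H_{zx}, H_z). For ε > 0 let V(ε) be the block-diagonal matrix with blocks V_α, εS, V_z. Assume I_z − V_z H_z is invertible and A := I_α − V_α H_α − V_α H_{αz}(I_z − V_z H_z)^{-1} V_z H_{zα} is invertible. Then there is ε₀ > 0 such that for all 0 < ε < ε₀ the matrix I − V(ε)H is invertible, and the upper-left a × a block of Σ(ε) := (I − V(ε)H)^{-1} V(ε) converges, as ε → 0⁺, to A^{-1} V_α. -/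

import Mathlib

/-!
At `ε = 0` the data block of `V(ε)` vanishes, so the `x`-rows of `I − V(0)H` are those of the
identity and the lower-right `(x, z)`-block `T` of `I − V(0)H` is block lower-triangular with
diagonal blocks `I_x` and `I_z − V_z H_z`. The Schur complement of `T` is exactly `A`; hence
`I − V(0)H` is invertible and the `α`-block of its inverse is `A⁻¹`. Since `V(ε)` is affine in `ε`,
the matrix `I − V(ε)H` stays invertible near `0`, and `(I − V(ε)H)⁻¹ V(ε)` is continuous at `0`,
with `α`-block `A⁻¹ V_α` there.
-/

open Matrix Filter Topology

namespace Matrix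

section Algebra

variable {𝕜 : Type*} {l m n o : Type*} [CommRing 𝕜]

theorem toBlocks₁₁_mul_fromBlocks_zero [Fintype n] [Fintype o] (X : Matrix (l ⊕ m) (n ⊕ o) 𝕜)
    (P : Matrix n n 𝕜) (Q : Matrix o o 𝕜) :
    (X * fromBlocks P 0 0 Q).toBlocks₁₁ = X.toBlocks₁₁ * P := by
  conv_lhs => rw [← fromBlocks_toBlocks X]
  rw [fromBlocks_multiply, toBlocks_fromBlocks₁₁, Matrix.mul_zero, add_zero]

variable [Fintype m] [Fintype n] [DecidableEq m] [DecidableEq n]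

theorem isUnit_det_fromBlocks_of_isUnit_det₂₂ {P : Matrix m m 𝕜} {Q : Matrix m n 𝕜}
    {R : Matrix n m 𝕜} {T : Matrix n n 𝕜} (hT : IsUnit T.det)
    (hS : IsUnit (P - Q * T⁻¹ * R).det) : IsUnit (fromBlocks P Q R T).det := by
  have := T.invertibleOfIsUnitDet hT
  rw [det_fromBlocks₂₂, invOf_eq_nonsing_inv]
  exact hT.mul hS

theorem toBlocks₁₁_inv_fromBlocks_of_isUnit_det₂₂ (P : Matrix m m 𝕜) (Q : Matrix m n 𝕜)
    (R : Matrix n m 𝕜) {T : Matrix n n 𝕜} (hT : IsUnit T.det) :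
    (fromBlocks P Q R T)⁻¹.toBlocks₁₁ = (P - Q * T⁻¹ * R)⁻¹ := by
  have := T.invertibleOfIsUnitDet hT
  by_cases hS : IsUnit (P - Q * T⁻¹ * R).det
  · have := (P - Q * ⅟T * R).invertibleOfIsUnitDet (by rwa [invOf_eq_nonsing_inv])
    have := fromBlocks₂₂Invertible P Q R T
    rw [← invOf_eq_nonsing_inv, invOf_fromBlocks₂₂_eq, toBlocks_fromBlocks₁₁,
      invOf_eq_nonsing_inv, invOf_eq_nonsing_inv]
  · -- both sides are the junk value `0` of `⁻¹` on singular matrices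
    have hM : ¬IsUnit (fromBlocks P Q R T).det := by
      rwa [det_fromBlocks₂₂, invOf_eq_nonsing_inv, IsUnit.mul_iff, and_iff_right hT]
    rw [nonsing_inv_apply_not_isUnit _ hM, nonsing_inv_apply_not_isUnit _ hS]
    rfl

theorem fromCols_mul_inv_fromBlocks_zero₁₂_mul_fromRows_zero (B₁ : Matrix l m 𝕜)
    (B₂ : Matrix l n 𝕜) (C : Matrix n m 𝕜) {K : Matrix n n 𝕜} (hK : IsUnit K.det)
    (D : Matrix n o 𝕜) :
    fromCols B₁ B₂ * (fromBlocks (1 : Matrix m m 𝕜) 0 C K)⁻¹ * fromRows (0 : Matrix m o 𝕜) D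
      = B₂ * K⁻¹ * D := by
  rw [inv_fromBlocks_zero₁₂_of_isUnit_iff _ _ _ (by simpa [isUnit_iff_isUnit_det] using hK),
    fromCols_mul_fromBlocks, fromCols_mul_fromRows]
  simp [Matrix.mul_assoc]

end Algebra

section Topology

variable {𝕜 : Type*} {l m n o : Type*}

theorem continuous_toBlocks₁₁ [TopologicalSpace 𝕜] :
    Continuous (toBlocks₁₁ : Matrix (l ⊕ m) (n ⊕ o) 𝕜 → Matrix l n 𝕜) :=
  continuous_id.matrix_submatrix Sum.inl Sum.inl

variable [NormedField 𝕜] [Fintype n] [DecidableEq n] {X : Type*} [TopologicalSpace X]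

theorem eventually_isUnit_det {M : X → Matrix n n 𝕜} {x₀ : X} (hM : ContinuousAt M x₀)
    (h : IsUnit (M x₀).det) : ∀ᶠ x in 𝓝 x₀, IsUnit (M x).det :=
  ((continuous_id.matrix_det.continuousAt.comp hM).eventually_ne h.ne_zero).mono
    fun _ ↦ isUnit_iff_ne_zero.mpr

theorem continuousAt_inv_mul {M W : X → Matrix n n 𝕜} {x₀ : X} (hM : ContinuousAt M x₀)
    (hW : ContinuousAt W x₀) (h : IsUnit (M x₀).det) :
    ContinuousAt (fun x ↦ (M x)⁻¹ * W x) x₀ := by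
  have hinv : ContinuousAt Ring.inverse (M x₀).det := by
    rw [Ring.inverse_eq_inv']
    exact continuousAt_inv₀ h.ne_zero
  exact ((continuousAt_matrix_inv _ hinv).comp hM).mul hW

end Topology

end Matrix

theorem lrvb_one_sub_mul_unperturbed {𝕜 m n o : Type*} [CommRing 𝕜] [Fintype m] [Fintype n]
    [Fintype o] [DecidableEq m] [DecidableEq n] [DecidableEq o]
    (Vα Hα : Matrix m m 𝕜) (Hx : Matrix n n 𝕜) (Vz Hz : Matrix o o 𝕜)
    (Hαx : Matrix m n 𝕜) (Hαz : Matrix m o 𝕜) (Hxα : Matrix n m 𝕜) (Hxz : Matrix n o 𝕜)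
    (Hzα : Matrix o m 𝕜) (Hzx : Matrix o n 𝕜) :
    1 - fromBlocks Vα 0 0 (fromBlocks 0 0 0 Vz) *
        fromBlocks Hα (fromCols Hαx Hαz) (fromRows Hxα Hzα) (fromBlocks Hx Hxz Hzx Hz) =
      fromBlocks (1 - Vα * Hα) (-(Vα * fromCols Hαx Hαz)) (-fromRows 0 (Vz * Hzα))
        (fromBlocks 1 0 (-(Vz * Hzx)) (1 - Vz * Hz)) := by
  ext (i | i | i) (j | j | j) <;> simp [fromBlocks_multiply, fromBlocks_mul_fromRows, one_apply]

/-- **Infinitesimal data perturbation does not change the LRVB covariance of the parameters.**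
With three blocks `α` (interest, size `a`), `x` (perturbed data, size `p`), `z` (nuisance,
size `b`), let `H` be the full `3 × 3` block Hessian and `V ε` the block-diagonal variational
covariance with blocks `Vα`, `ε S`, `Vz`. If `I_z − Vz Hz` and
`A := I_α − Vα Hα − Vα Hαz (I_z − Vz Hz)⁻¹ Vz Hzα` are invertible, then for all sufficiently
small `ε > 0` the matrix `I − V(ε) H` is invertible, and the upper-left `a × a` block of
`Σ(ε) := (I − V(ε)H)⁻¹ V(ε)` converges to `A⁻¹ Vα` as `ε → 0⁺`. -/
theorem lrvb_perturbed_alpha_block_limit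
    {a p b : ℕ}
    (Vα Hα : Matrix (Fin a) (Fin a) ℝ) (S Hx : Matrix (Fin p) (Fin p) ℝ)
    (Vz Hz : Matrix (Fin b) (Fin b) ℝ)
    (Hαx : Matrix (Fin a) (Fin p) ℝ) (Hαz : Matrix (Fin a) (Fin b) ℝ)
    (Hxα : Matrix (Fin p) (Fin a) ℝ) (Hxz : Matrix (Fin p) (Fin b) ℝ)
    (Hzα : Matrix (Fin b) (Fin a) ℝ) (Hzx : Matrix (Fin b) (Fin p) ℝ)
    (H : Matrix (Fin a ⊕ (Fin p ⊕ Fin b)) (Fin a ⊕ (Fin p ⊕ Fin b)) ℝ)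
    (hH : H = Matrix.fromBlocks Hα (Matrix.fromCols Hαx Hαz)
      (Matrix.fromRows Hxα Hzα) (Matrix.fromBlocks Hx Hxz Hzx Hz))
    (V : ℝ → Matrix (Fin a ⊕ (Fin p ⊕ Fin b)) (Fin a ⊕ (Fin p ⊕ Fin b)) ℝ)
    (hV : ∀ ε, V ε = Matrix.fromBlocks Vα 0 0 (Matrix.fromBlocks (ε • S) 0 0 Vz))
    (hz : IsUnit (1 - Vz * Hz).det)
    (A : Matrix (Fin a) (Fin a) ℝ)
    (hA : A = 1 - Vα * Hα - Vα * Hαz * (1 - Vz * Hz)⁻¹ * Vz * Hzα)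
    (hAu : IsUnit A.det) :
    (∃ ε₀ > (0 : ℝ), ∀ ε : ℝ, 0 < ε → ε < ε₀ → IsUnit (1 - V ε * H).det) ∧
    Tendsto (fun ε : ℝ => ((1 - V ε * H)⁻¹ * V ε).toBlocks₁₁)
      (nhdsWithin 0 (Set.Ioi 0)) (nhds (A⁻¹ * Vα)) := by
  set T := fromBlocks (1 : Matrix (Fin p) (Fin p) ℝ) 0 (-(Vz * Hzx)) (1 - Vz * Hz)
  have hT : IsUnit T.det := by rwa [det_fromBlocks_zero₁₂, det_one, one_mul]
  have hM₀ : 1 - V 0 * H =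
      fromBlocks (1 - Vα * Hα) (-(Vα * fromCols Hαx Hαz)) (-fromRows 0 (Vz * Hzα)) T := by
    rw [hV, hH, zero_smul, lrvb_one_sub_mul_unperturbed]
  have hSchur : 1 - Vα * Hα - -(Vα * fromCols Hαx Hαz) * T⁻¹ *
      -fromRows (0 : Matrix (Fin p) (Fin a) ℝ) (Vz * Hzα) = A := by
    rw [Matrix.neg_mul, Matrix.neg_mul, Matrix.mul_neg, neg_neg, Matrix.mul_assoc Vα,
      Matrix.mul_assoc Vα, fromCols_mul_inv_fromBlocks_zero₁₂_mul_fromRows_zero _ _ _ hz, hA]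
    simp only [Matrix.mul_assoc]
  have hunit₀ : IsUnit (1 - V 0 * H).det :=
    hM₀ ▸ isUnit_det_fromBlocks_of_isUnit_det₂₂ hT (hSchur ▸ hAu)
  have hlimit₀ : ((1 - V 0 * H)⁻¹ * V 0).toBlocks₁₁ = A⁻¹ * Vα := by
    rw [hV 0, toBlocks₁₁_mul_fromBlocks_zero, ← hV 0, hM₀,
      toBlocks₁₁_inv_fromBlocks_of_isUnit_det₂₂ _ _ _ hT, hSchur]
  have hVcont : Continuous V := by rw [funext hV]; fun_prop
  have hMcont : Continuous fun ε ↦ 1 - V ε * H := by fun_prop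
  refine ⟨?_, ?_⟩
  · obtain ⟨ε₀, hε₀, hsub⟩ := mem_nhdsGT_iff_exists_Ioo_subset.mp <|
      nhdsWithin_le_nhds (eventually_isUnit_det hMcont.continuousAt hunit₀)
    exact ⟨ε₀, hε₀, fun ε hε hεε₀ ↦ hsub ⟨hε, hεε₀⟩⟩
  · rw [← hlimit₀]
    exact ((continuous_toBlocks₁₁.continuousAt.comp
      (continuousAt_inv_mul hMcont.continuousAt hVcont.continuousAt hunit₀)).tendsto).mono_left
        nhdsWithin_le_nhds
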